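/- For real q with 0 < q < 1, x1, x2 in [0,1], naturals j <= n with 1 + [x1]_q - [x2]_q nonzero, we have (1/(1+[x1]_q-[x2]_q)^{n-j}) * sum over k from j to n of (C(k,j)/C(n,j)) * B_{k,n}(x1,x2|q) = [x1]_q^j. -/

import Mathlib

noncomputable def qNum (q x : ℝ) : ℝ := (1 - q ^ x) / (1 - q)

noncomputable def qBern (q : ℝ) (k n : ℕ) (x1 x2 : ℝ) : ℝ :=
  (n.choose k : ℝ) * (qNum q x1) ^ k * (qNum q⁻¹ (1 - x2)) ^ (n - k)

/-! The reflection `[1 - x]_{q⁻¹} = 1 - [x]_q` turns `B_{k,n}(x1, x2 | q)` into the ordinary binomial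
term `C(n,k) a^k b^(n-k)` with `a = [x1]_q`, `b = 1 - [x2]_q`. The identity
`C(k,j) C(n,k) = C(n,j) C(n-j,k-j)` and the binomial theorem then give
`∑ k, C(k,j) C(n,k) a^k b^(n-k) = C(n,j) a^j (a + b)^(n-j)`, and `a + b = 1 + [x1]_q - [x2]_q`. -/

theorem Finset.sum_Icc_choose_mul_choose_mul_pow_mul_pow {R : Type*} [CommSemiring R]
    (a b : R) (n j : ℕ) :
    ∑ k ∈ Finset.Icc j n, (k.choose j * n.choose k : R) * a ^ k * b ^ (n - k)
      = n.choose j * a ^ j * (a + b) ^ (n - j) := by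
  rcases lt_or_ge n j with hnj | hjn
  · simp [Nat.choose_eq_zero_of_lt hnj, Finset.Icc_eq_empty_of_lt hnj]
  obtain ⟨m, rfl⟩ := Nat.exists_eq_add_of_le hjn
  have hIcc : Finset.Icc j (j + m) = (Finset.range (m + 1)).map (addLeftEmbedding j) := by
    simp [Nat.range_succ_eq_Icc_zero]
  rw [hIcc, Finset.sum_map, Nat.add_sub_cancel_left, add_pow, Finset.mul_sum]
  refine Finset.sum_congr rfl fun i _ => ?_
  have hchoose : (j + i).choose j * (j + m).choose (j + i) = (j + m).choose j * m.choose i := by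
    rw [mul_comm, Nat.choose_mul (by omega : j ≤ j + i)]
    simp
  rw [addLeftEmbedding_apply, show j + m - (j + i) = m - i by omega, pow_add, ← Nat.cast_mul,
    hchoose, Nat.cast_mul]
  ring

lemma qNum_inv_one_sub {q : ℝ} (hq0 : 0 < q) (hq1 : q ≠ 1) (x : ℝ) :
    qNum q⁻¹ (1 - x) = 1 - qNum q x := by
  have hqx : q ^ (1 - x) * q ^ x = q := by rw [← Real.rpow_add hq0]; norm_num
  have h1q : 1 - q ≠ 0 := sub_ne_zero.mpr hq1.symm
  have h1q' : 1 - q⁻¹ ≠ 0 := sub_ne_zero.mpr (by simpa [eq_comm] using hq1)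
  rw [qNum, qNum, Real.inv_rpow hq0.le, div_eq_iff h1q']
  field_simp
  linear_combination (1 - q) * hqx

theorem qBern_moment_general (q : ℝ) (hq0 : 0 < q) (hq1 : q < 1)
    (x1 x2 : ℝ)
    (n j : ℕ) (hjn : j ≤ n) (h : 1 + qNum q x1 - qNum q x2 ≠ 0) :
    (1 / (1 + qNum q x1 - qNum q x2) ^ (n - j)) *
      ∑ k ∈ Finset.Icc j n, ((k.choose j : ℝ) / (n.choose j : ℝ)) * qBern q k n x1 x2
      = (qNum q x1) ^ j := by
  have hchoose : (n.choose j : ℝ) ≠ 0 := by exact_mod_cast (Nat.choose_pos hjn).ne'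
  have hsum : ∑ k ∈ Finset.Icc j n, ((k.choose j : ℝ) / (n.choose j : ℝ)) * qBern q k n x1 x2
      = qNum q x1 ^ j * (1 + qNum q x1 - qNum q x2) ^ (n - j) := by
    simp only [qBern, qNum_inv_one_sub hq0 hq1.ne, div_mul_eq_mul_div, ← mul_assoc,
      ← Finset.sum_div, Finset.sum_Icc_choose_mul_choose_mul_pow_mul_pow]
    field_simp
    ring
  rw [hsum]
  field_simp

theorem qBern_moment (q : ℝ) (hq0 : 0 < q) (hq1 : q < 1)
    (x1 x2 : ℝ) (hx1 : x1 ∈ Set.Icc (0:ℝ) 1) (hx2 : x2 ∈ Set.Icc (0:ℝ) 1)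
    (n j : ℕ) (hjn : j ≤ n) (h : 1 + qNum q x1 - qNum q x2 ≠ 0) :
    (1 / (1 + qNum q x1 - qNum q x2) ^ (n - j)) *
      ∑ k ∈ Finset.Icc j n, ((k.choose j : ℝ) / (n.choose j : ℝ)) * qBern q k n x1 x2
      = (qNum q x1) ^ j :=
  qBern_moment_general q hq0 hq1 x1 x2 n j hjn h
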